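/- With Z_s^k(x) = ‖x‖^{s−2}((s+n−2k) ι_x ε_x − (s−n+2k) ε_x ι_x) on ℝ^n \ {0}, and assuming s+n−2k−2 ≠ 0 and s−n+2k−2 ≠ 0, the partial derivative satisfies ∂_{x_j} Z_s^k(x) = Z_{s−2}^k(x) ∘ (s x_j Id + c_{k,s} ι_x ε_j + d_{k,s} ε_x ι_j), where c_{k,s} = 2s/(s+n−2k−2) and d_{k,s} = 2s/(s−n+2k−2). -/

import Mathlib

/-!
`ι_v` and `ε_w` satisfy the canonical anticommutation relations `ι_v ε_w + ε_w ι_v = ⟪v, w⟫`,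
`ι_v² = ε_v² = 0`. Consequently `Z_t^k(x)` acts on the range of `ι_x` as the scalar
`‖x‖^t (t + n - 2k)` and on the range of `ε_x` as `-‖x‖^t (t - n + 2k)`. By the Leibniz rule,
`∂_j Z_s^k(x)` is `(s - 2) ‖x‖^{s-4} x_j (…)` plus `‖x‖^{s-2}` times the derivative of the quadratic
part, `∂_j(ι_x ε_x) = x_j - ε_x ι_j + ι_x ε_j` (and its mirror image). On the right-hand side the
two correction terms `ι_x ε_j ω`, `ε_x ι_j ω` lie in those two ranges, and `c_{k,s}`, `d_{k,s}` are
chosen to cancel the eigenvalues `s + n - 2k - 2`, `s - n + 2k - 2` of `Z_{s-2}^k(x)` there.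
After `ι_x ε_x ω = ‖x‖² ω - ε_x ι_x ω`, both sides are combinations of `ω`, `ε_x ι_x ω`,
`ι_x ε_j ω`, `ε_x ι_j ω` with equal coefficients.
-/

noncomputable section

/-- `ℝ^n` with its standard Euclidean inner product. -/
abbrev V (n : ℕ) := EuclideanSpace ℝ (Fin n)

/-- A concrete (normed) model of the exterior algebra `Λ` of `(ℝ^n)^*`: the coordinates of a
form with respect to the standard basis `e_I^* = e_{i₁}^* ∧ ⋯ ∧ e_{i_k}^*` (`I` an increasingly
ordered subset of `{1,…,n}`). -/
abbrev Lam (n : ℕ) := EuclideanSpace ℝ (Finset (Fin n))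

/-- The sign `(−1)^{#{i ∈ J | i < j}}`. -/
def sgn {n : ℕ} (j : Fin n) (J : Finset (Fin n)) : ℝ :=
  (-1 : ℝ) ^ (J.filter fun i => i < j).card

/-- Exterior multiplication by `e_j^*`, in coordinates. -/
def rawEps {n : ℕ} (j : Fin n) : (Finset (Fin n) → ℝ) →ₗ[ℝ] (Finset (Fin n) → ℝ) where
  toFun c := fun J => if j ∈ J then sgn j J * c (J.erase j) else 0
  map_add' c d := by funext J; by_cases h : j ∈ J <;> simp [h, mul_add]
  map_smul' r c := by
    funext J; by_cases h : j ∈ J <;> simp [h, mul_comm, mul_left_comm]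

/-- Interior product with `e_j`, in coordinates. -/
def rawIot {n : ℕ} (j : Fin n) : (Finset (Fin n) → ℝ) →ₗ[ℝ] (Finset (Fin n) → ℝ) where
  toFun c := fun J => if j ∉ J then sgn j J * c (insert j J) else 0
  map_add' c d := by funext J; by_cases h : j ∈ J <;> simp [h, mul_add]
  map_smul' r c := by
    funext J; by_cases h : j ∈ J <;> simp [h, mul_comm, mul_left_comm]

/-- Exterior multiplication `ε_j` by `e_j^*`. -/
def epsB {n : ℕ} (j : Fin n) : Lam n →ₗ[ℝ] Lam n :=
  (WithLp.linearEquiv 2 ℝ _).symm.toLinearMap ∘ₗ rawEps j ∘ₗ (WithLp.linearEquiv 2 ℝ _).toLinearMap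

/-- Interior product `ι_j` with `e_j`. -/
def iotB {n : ℕ} (j : Fin n) : Lam n →ₗ[ℝ] Lam n :=
  (WithLp.linearEquiv 2 ℝ _).symm.toLinearMap ∘ₗ rawIot j ∘ₗ (WithLp.linearEquiv 2 ℝ _).toLinearMap

/-- Exterior multiplication `ε_x` by the covector `x^*` dual to `x ∈ ℝ^n`. -/
def epsV {n : ℕ} (x : V n) : Lam n →ₗ[ℝ] Lam n := ∑ j : Fin n, x j • epsB j

/-- Interior product `ι_x` with the vector `x ∈ ℝ^n`. -/
def iotV {n : ℕ} (x : V n) : Lam n →ₗ[ℝ] Lam n := ∑ j : Fin n, x j • iotB j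

/-- The partial derivative `∂_j` of a `Λ`-valued function, in the direction `e_j`. -/
def pd {n : ℕ} (j : Fin n) (f : V n → Lam n) : V n → Lam n :=
  fun x => fderiv ℝ f x (EuclideanSpace.single j (1 : ℝ))

/-- The exterior differential `d = Σ_j ε_j ∂_j`. -/
def extd {n : ℕ} (f : V n → Lam n) : V n → Lam n :=
  fun x => ∑ j : Fin n, epsB j (pd j f x)

/-- The co-differential `δ = −Σ_j ι_j ∂_j`. -/
def cod {n : ℕ} (f : V n → Lam n) : V n → Lam n :=
  fun x => -∑ j : Fin n, iotB j (pd j f x)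

/-- The `End(Λ^k)`-valued function
`Z_s^k(x) = ‖x‖^{s−2}((s+n−2k) ι_x ε_x − (s−n+2k) ε_x ι_x)`. -/
def Zop {n : ℕ} (s : ℝ) (k : ℕ) (x : V n) : Lam n →ₗ[ℝ] Lam n :=
  Real.rpow ‖x‖ (s - 2) •
    ((s + n - 2 * k) • (iotV x ∘ₗ epsV x) - (s - n + 2 * k) • (epsV x ∘ₗ iotV x))


open Finset

theorem sum_smul_mul_add_mul_sum_smul {ι R A : Type*} [Fintype ι] [CommSemiring R] [Semiring A]
    [Algebra R A] (a b : ι → R) (T S : ι → A) :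
    (∑ i, a i • T i) * (∑ l, b l • S l) + (∑ l, b l • S l) * (∑ i, a i • T i)
      = ∑ i, ∑ l, (a i * b l) • (T i * S l + S l * T i) := by
  rw [sum_mul_sum, sum_mul_sum, sum_comm (f := fun l i => b l • S l * (a i • T i)),
    ← sum_add_distrib]
  simp only [← sum_add_distrib, smul_mul_smul_comm, smul_add, mul_comm (b _)]

theorem LinearMap.hasFDerivAt_diag {𝕜 E F : Type*} [NontriviallyNormedField 𝕜]
    [CompleteSpace 𝕜] [NormedAddCommGroup E] [NormedSpace 𝕜 E] [FiniteDimensional 𝕜 E]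
    [NormedAddCommGroup F] [NormedSpace 𝕜 F] (B : E →ₗ[𝕜] E →ₗ[𝕜] F) (x : E) :
    HasFDerivAt (fun z => B z z) (LinearMap.toContinuousLinearMap (B.flip x + B x)) x := by
  let B' : E →L[𝕜] E →L[𝕜] F :=
    LinearMap.toContinuousLinearMap (LinearMap.toContinuousLinearMap.toLinearMap ∘ₗ B)
  convert B'.hasFDerivAt_of_bilinear (hasFDerivAt_id x) (hasFDerivAt_id x) using 1 <;> ext <;>
    simp [B', add_comm]

theorem hasFDerivAt_norm_rpow_of_ne_zero {E : Type*} [NormedAddCommGroup E]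
    [InnerProductSpace ℝ E] {x : E} (hx : x ≠ 0) (p : ℝ) :
    HasFDerivAt (fun z : E => ‖z‖ ^ p) ((p * ‖x‖ ^ (p - 2)) • innerSL ℝ x) x := by
  convert (hasStrictFDerivAt_norm_sq x).hasFDerivAt.rpow_const (p := p / 2) (by simp [hx])
    using 1
  · ext z
    simp [← Real.rpow_natCast_mul (norm_nonneg _), mul_div_cancel₀]
  · simp_rw [← Real.rpow_natCast_mul (norm_nonneg _), ← Nat.cast_smul_eq_nsmul ℝ, smul_smul]
    ring_nf

section Exterior

variable {n : ℕ}

theorem sgn_mul_self (j : Fin n) (J : Finset (Fin n)) : sgn j J * sgn j J = 1 := by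
  rw [sgn, ← mul_pow]; norm_num

theorem sgn_insert {i : Fin n} {J : Finset (Fin n)} (j : Fin n) (hi : i ∉ J) :
    sgn j (insert i J) = (if i < j then -1 else 1) * sgn j J := by
  rw [sgn, sgn, filter_insert]
  by_cases h : i < j
  · rw [if_pos h, if_pos h, card_insert_of_notMem (by simp [hi]), pow_succ]; ring
  · rw [if_neg h, if_neg h, one_mul]

theorem sgn_erase {i : Fin n} {J : Finset (Fin n)} (j : Fin n) (hi : i ∈ J) :
    sgn j (J.erase i) = (if i < j then -1 else 1) * sgn j J := by
  have h := sgn_insert j (notMem_erase i J)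
  rw [insert_erase hi] at h
  rw [h]; split_ifs <;> ring

theorem epsB_apply (j : Fin n) (ω : Lam n) (J : Finset (Fin n)) :
    epsB j ω J = if j ∈ J then sgn j J * ω (J.erase j) else 0 := rfl

theorem iotB_apply (j : Fin n) (ω : Lam n) (J : Finset (Fin n)) :
    iotB j ω J = if j ∉ J then sgn j J * ω (insert j J) else 0 := rfl

theorem iotB_mul_epsB_add_epsB_mul_iotB (i j : Fin n) :
    iotB i * epsB j + epsB j * iotB i = if i = j then (1 : Module.End ℝ (Lam n)) else 0 := by
  ext ω J
  rcases eq_or_ne i j with rfl | hij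
  · by_cases h : i ∈ J <;>
      simp [iotB_apply, epsB_apply, h, insert_erase, sgn_erase, sgn_insert, ← mul_assoc,
        sgn_mul_self]
  · rcases hij.lt_or_gt with h | h <;> by_cases hi : i ∈ J <;> by_cases hj : j ∈ J <;>
      simp [iotB_apply, epsB_apply, hi, hj, hij, hij.symm, h, h.asymm, erase_insert_of_ne,
        sgn_insert, sgn_erase] <;> ring

theorem iotB_mul_iotB_add_iotB_mul_iotB (i j : Fin n) :
    iotB i * iotB j + iotB j * iotB i = 0 := by
  ext ω J
  rcases eq_or_ne i j with rfl | hij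
  · simp [iotB_apply]
  · rcases hij.lt_or_gt with h | h <;> by_cases hi : i ∈ J <;> by_cases hj : j ∈ J <;>
      simp [iotB_apply, hi, hj, hij, hij.symm, h, h.asymm, insert_comm i j, sgn_insert] <;> ring

theorem epsB_mul_epsB_add_epsB_mul_epsB (i j : Fin n) :
    epsB i * epsB j + epsB j * epsB i = 0 := by
  ext ω J
  rcases eq_or_ne i j with rfl | hij
  · simp [epsB_apply]
  · rcases hij.lt_or_gt with h | h <;> by_cases hi : i ∈ J <;> by_cases hj : j ∈ J <;>
      simp [epsB_apply, hi, hj, hij, hij.symm, h, h.asymm, erase_right_comm (a := i),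
        sgn_erase] <;> ring

theorem iotV_mul_epsV_add_epsV_mul_iotV (v w : V n) :
    iotV v * epsV w + epsV w * iotV v = inner ℝ v w • (1 : Module.End ℝ (Lam n)) := by
  rw [iotV, epsV, sum_smul_mul_add_mul_sum_smul]
  simp [iotB_mul_epsB_add_epsB_mul_iotB, PiLp.inner_apply, sum_smul, mul_comm]

theorem iotV_mul_self (v : V n) : iotV v * iotV v = 0 := by
  have h : iotV v * iotV v + iotV v * iotV v = 0 := by
    rw [iotV, sum_smul_mul_add_mul_sum_smul]
    simp [iotB_mul_iotB_add_iotB_mul_iotB]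
  rwa [← two_smul ℝ, smul_eq_zero, or_iff_right two_ne_zero] at h

theorem epsV_mul_self (v : V n) : epsV v * epsV v = 0 := by
  have h : epsV v * epsV v + epsV v * epsV v = 0 := by
    rw [epsV, sum_smul_mul_add_mul_sum_smul]
    simp [epsB_mul_epsB_add_epsB_mul_epsB]
  rwa [← two_smul ℝ, smul_eq_zero, or_iff_right two_ne_zero] at h

theorem iotV_epsV_add_epsV_iotV (v w : V n) (ω : Lam n) :
    iotV v (epsV w ω) + epsV w (iotV v ω) = inner ℝ v w • ω :=
  LinearMap.congr_fun (iotV_mul_epsV_add_epsV_mul_iotV v w) ω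

theorem iotV_iotV (v : V n) (ω : Lam n) : iotV v (iotV v ω) = 0 :=
  LinearMap.congr_fun (iotV_mul_self v) ω

theorem epsV_epsV (v : V n) (ω : Lam n) : epsV v (epsV v ω) = 0 :=
  LinearMap.congr_fun (epsV_mul_self v) ω

@[simps]
def iotVLin : V n →ₗ[ℝ] Module.End ℝ (Lam n) where
  toFun := iotV
  map_add' v w := by simp [iotV, add_smul, sum_add_distrib]
  map_smul' c v := by simp [iotV, smul_sum, smul_smul]

@[simps]
def epsVLin : V n →ₗ[ℝ] Module.End ℝ (Lam n) where
  toFun := epsV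
  map_add' v w := by simp [epsV, add_smul, sum_add_distrib]
  map_smul' c v := by simp [epsV, smul_sum, smul_smul]

theorem iotV_single (j : Fin n) : iotV (EuclideanSpace.single j (1 : ℝ)) = iotB j := by
  simp [iotV, ite_smul]

theorem epsV_single (j : Fin n) : epsV (EuclideanSpace.single j (1 : ℝ)) = epsB j := by
  simp [epsV, ite_smul]

section Zop

variable (s : ℝ) (k : ℕ) (x : V n)

theorem Zop_apply (ω : Lam n) :
    Zop s k x ω = ‖x‖ ^ (s - 2) •
      ((s + n - 2 * k) • iotV x (epsV x ω) - (s - n + 2 * k) • epsV x (iotV x ω)) := rfl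

theorem Zop_apply_iotV (u : Lam n) :
    Zop s k x (iotV x u) = (‖x‖ ^ (s - 2) * (s + n - 2 * k) * ‖x‖ ^ 2) • iotV x u := by
  have h := iotV_epsV_add_epsV_iotV x x (iotV x u)
  rw [iotV_iotV, map_zero, add_zero, real_inner_self_eq_norm_sq] at h
  rw [Zop_apply, h, iotV_iotV, map_zero]
  module

theorem Zop_apply_epsV (u : Lam n) :
    Zop s k x (epsV x u) = -(‖x‖ ^ (s - 2) * (s - n + 2 * k) * ‖x‖ ^ 2) • epsV x u := by
  have h := iotV_epsV_add_epsV_iotV x x (epsV x u)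
  rw [epsV_epsV, map_zero, zero_add, real_inner_self_eq_norm_sq] at h
  rw [Zop_apply, h, epsV_epsV, map_zero]
  module

theorem fderiv_Zop_apply (hx : x ≠ 0) (ω : Lam n) (h : V n) :
    fderiv ℝ (fun z => Zop s k z ω) x h
      = ((s - 2) * ‖x‖ ^ (s - 2 - 2) * inner ℝ x h) •
          ((s + n - 2 * k) • iotV x (epsV x ω) - (s - n + 2 * k) • epsV x (iotV x ω))
        + ‖x‖ ^ (s - 2) •
          ((s + n - 2 * k) • (iotV h (epsV x ω) + iotV x (epsV h ω))
            - (s - n + 2 * k) • (epsV h (iotV x ω) + epsV x (iotV h ω))) := by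
  let B₁ := ((LinearMap.mul ℝ (Module.End ℝ (Lam n))).compl₁₂ iotVLin epsVLin).compr₂
    (LinearMap.applyₗ ω)
  let B₂ := ((LinearMap.mul ℝ (Module.End ℝ (Lam n))).compl₁₂ epsVLin iotVLin).compr₂
    (LinearMap.applyₗ ω)
  have hZ : (fun z => Zop s k z ω) =
      fun z => ‖z‖ ^ (s - 2) • ((s + n - 2 * k) • B₁ z z - (s - n + 2 * k) • B₂ z z) := rfl
  have hD := (hasFDerivAt_norm_rpow_of_ne_zero hx (s - 2)).fun_smul
    (((B₁.hasFDerivAt_diag x).fun_const_smul (s + n - 2 * k : ℝ)).fun_sub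
      ((B₂.hasFDerivAt_diag x).fun_const_smul (s - n + 2 * k : ℝ)))
  rw [hZ, hD.fderiv]
  simp [B₁, B₂]
  exact add_comm _ _

end Zop

end Exterior

/-- The derivative identity
`∂_{x_j} Z_s^k(x) = Z_{s−2}^k(x) ∘ (s x_j Id + c_{k,s} ι_x ε_j + d_{k,s} ε_x ι_j)` with
`c_{k,s} = 2s/(s+n−2k−2)`, `d_{k,s} = 2s/(s−n+2k−2)`. -/
theorem Zop_deriv {n k : ℕ} (s : ℝ) (x : V n) (hx : x ≠ 0)
    (h1 : s + n - 2 * k - 2 ≠ 0) (h2 : s - n + 2 * k - 2 ≠ 0) (j : Fin n) (ω : Lam n) :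
    fderiv ℝ (fun z => Zop s k z ω) x (EuclideanSpace.single j (1 : ℝ))
      = Zop (s - 2) k x
          ((s * x j) • ω
            + (2 * s / (s + n - 2 * k - 2)) • iotV x (epsB j ω)
            + (2 * s / (s - n + 2 * k - 2)) • epsV x (iotB j ω)) := by
  have hιε : iotB j (epsV x ω) = x j • ω - epsV x (iotB j ω) := by
    simpa [iotV_single, EuclideanSpace.inner_single_left] using
      eq_sub_of_add_eq (iotV_epsV_add_epsV_iotV (.single j 1) x ω)
  have hει : epsB j (iotV x ω) = x j • ω - iotV x (epsB j ω) := by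
    simpa [epsV_single, EuclideanSpace.inner_single_right] using
      eq_sub_of_add_eq' (iotV_epsV_add_epsV_iotV x (.single j 1) ω)
  have hP : iotV x (epsV x ω) = ‖x‖ ^ 2 • ω - epsV x (iotV x ω) := by
    rw [← real_inner_self_eq_norm_sq]
    exact eq_sub_of_add_eq (iotV_epsV_add_epsV_iotV x x ω)
  have hpow : ‖x‖ ^ (s - 2) = ‖x‖ ^ (s - 2 - 2) * ‖x‖ ^ 2 := by
    rw [← Real.rpow_natCast, ← Real.rpow_add (norm_pos_iff.mpr hx)]
    norm_num
  rw [fderiv_Zop_apply s k x hx, map_add, map_add, map_smul, map_smul, map_smul, Zop_apply_iotV,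
    Zop_apply_epsV, Zop_apply, iotV_single, epsV_single, hιε, hει, hP, hpow]
  simp only [EuclideanSpace.inner_single_right, conj_trivial, one_mul]
  match_scalars <;> field_simp <;> ring
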